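/- arXiv:2502.10777 — 2 statements merged into one kernel-verified Lean document; each statement's English description precedes it below -/
import Mathlib

section
/- For a FIFO queue with the dropping mechanism, the event that bits departing at slot t have waited more than D_max slots is equivalent to the queue-length violation event Q_tmp(t+1) > Q_th(t): if Q(t) + A(t) − S(t) > Σ_{i=t−D_max+1}^{t} A(i) and S(t) > 0, then some bit served at slot t+D_max (or still in the queue at that time) arrived before slot t−D_max+1, i.e., its delay exceeds D_max. -/
theorem fifo_delay_violation_of_queue_violation_general
    (Λ Dep : ℕ → ℝ) (Dmax t : ℕ)
    (hDmono : Monotone Dep)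
    (hDmax : Dmax ≤ t)
    -- queue-length violation: Q_tmp(t+1) > Q_th(t)
    (hviol : Λ t - Dep t > Λ t - Λ (t - Dmax)) :
    ∃ x : ℝ, Dep t < x ∧ x ≤ Λ (t - Dmax) ∧
      sInf {τ : ℕ | x ≤ Λ τ} ≤ t - Dmax ∧
      ∀ τ : ℕ, x ≤ Dep τ → Dmax < τ - sInf {τ' : ℕ | x ≤ Λ τ'} := by
  -- The witness is the last bit that arrived by slot `t - Dmax`.
  have hqueued : Dep t < Λ (t - Dmax) := by linarith
  have harrival : sInf {τ : ℕ | Λ (t - Dmax) ≤ Λ τ} ≤ t - Dmax :=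
    Nat.sInf_le (Set.mem_ofPred.2 le_rfl)
  refine ⟨Λ (t - Dmax), hqueued, le_rfl, harrival, fun τ hτ => ?_⟩
  have hdeparts_later : t < τ := hDmono.reflect_lt (hqueued.trans_le hτ)
  omega

/-- In a FIFO queue (described by the nondecreasing cumulative arrival
curve `Λ` and cumulative departure curve `Dep`, with `Dep ≤ Λ`), if the queue-length
violation event occurs at slot `t`, i.e. the pre-drop backlog
`Q_tmp(t+1) = Λ(t) − Dep(t)` exceeds the recent-arrival threshold
`Q_th(t) = Λ(t) − Λ(t − D_max)`, then some bit level `x` still in the queue at the end of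
slot `t` arrived by slot `t − D_max` (its arrival slot `sInf {τ | x ≤ Λ τ} ≤ t − D_max`),
so whenever it departs (any slot `τ` with `x ≤ Dep τ`) its delay exceeds `D_max`. -/
theorem fifo_delay_violation_of_queue_violation
    (Λ Dep : ℕ → ℝ) (Dmax t : ℕ)
    (hΛmono : Monotone Λ) (hDmono : Monotone Dep)
    (hDle : ∀ τ, Dep τ ≤ Λ τ) (hΛ0 : Λ 0 = 0)
    (hDmax : Dmax ≤ t)
    -- queue-length violation: Q_tmp(t+1) > Q_th(t)
    (hviol : Λ t - Dep t > Λ t - Λ (t - Dmax)) :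
    ∃ x : ℝ, Dep t < x ∧ x ≤ Λ (t - Dmax) ∧
      sInf {τ : ℕ | x ≤ Λ τ} ≤ t - Dmax ∧
      ∀ τ : ℕ, x ≤ Dep τ → Dmax < τ - sInf {τ' : ℕ | x ≤ Λ τ'} :=
  fifo_delay_violation_of_queue_violation_general Λ Dep Dmax t hDmono hDmax hviol
end

section
/- If the per-step policy improvement condition E_{s,a ∼ π_new}[A^{π_old}(s,a)] ≥ 0 holds for a finite MDP with discount γ ∈ [0,1), where A^{π_old}(s,a) = r(s,a) + γ·E[V^{π_old}(s')] − V^{π_old}(s), then the new policy's value is at least the old policy's: V^{π_new}(s) ≥ V^{π_old}(s) for all states s, provided the expectation is nonnegative under the state distribution induced by π_new started from each s (performance difference lemma). -/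
/-!
Let `T` be the Bellman operator of `πnew`. A nonnegative expected advantage says exactly
`Vold ≤ T Vold`, while `Vnew = T Vnew`. Since `T V - T W` is `γ` times an average of `V - W`,
the maximum `M` of `Vold - Vnew` over the finite state space satisfies `M ≤ γ M`, so `M ≤ 0`.
-/

open Finset

theorem sum_mul_le_of_nonneg_of_sum_eq_one {ι : Type*} [Fintype ι] {w f : ι → ℝ} {c : ℝ}
    (hw : ∀ i, 0 ≤ w i) (hw₁ : ∑ i, w i = 1) (hf : ∀ i, f i ≤ c) : ∑ i, w i * f i ≤ c :=
  calc ∑ i, w i * f i ≤ ∑ i, w i * c :=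
        sum_le_sum fun i _ => mul_le_mul_of_nonneg_left (hf i) (hw i)
    _ = c := by rw [← sum_mul, hw₁, one_mul]

section Bellman

variable {S A : Type*} [Fintype S] [Fintype A]

def bellman (P : S → A → S → ℝ) (r : S → A → ℝ) (γ : ℝ) (π : S → A → ℝ) (V : S → ℝ) (s : S) :
    ℝ :=
  ∑ a, π s a * (r s a + γ * ∑ s', P s a s' * V s')

variable {P : S → A → S → ℝ} {r : S → A → ℝ} {γ : ℝ} {π : S → A → ℝ}

theorem bellman_sub_bellman (V W : S → ℝ) (s : S) :
    bellman P r γ π V s - bellman P r γ π W s =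
      γ * ∑ a, π s a * ∑ s', P s a s' * (V s' - W s') := by
  rw [bellman, bellman, ← sum_sub_distrib, mul_sum]
  refine sum_congr rfl fun a _ => ?_
  simp only [mul_sub, sum_sub_distrib]
  ring

theorem sum_mul_advantage (hπ₁ : ∀ s, ∑ a, π s a = 1) (V : S → ℝ) (s : S) :
    ∑ a, π s a * (r s a + γ * ∑ s', P s a s' * V s' - V s) = bellman P r γ π V s - V s := by
  simp only [bellman, mul_sub, sum_sub_distrib, ← sum_mul, hπ₁, one_mul]

variable (hγ₀ : 0 ≤ γ) (hP₀ : ∀ s a s', 0 ≤ P s a s') (hP₁ : ∀ s a, ∑ s', P s a s' = 1)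
  (hπ₀ : ∀ s a, 0 ≤ π s a) (hπ₁ : ∀ s, ∑ a, π s a = 1)
include hγ₀ hP₀ hP₁ hπ₀ hπ₁

theorem bellman_sub_bellman_le {V W : S → ℝ} {c : ℝ} (h : ∀ s, V s - W s ≤ c) (s : S) :
    bellman P r γ π V s - bellman P r γ π W s ≤ γ * c := by
  rw [bellman_sub_bellman]
  exact mul_le_mul_of_nonneg_left (sum_mul_le_of_nonneg_of_sum_eq_one (hπ₀ s) (hπ₁ s)
    fun a => sum_mul_le_of_nonneg_of_sum_eq_one (hP₀ s a) (hP₁ s a) h) hγ₀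

theorem le_of_le_bellman_of_eq_bellman (hγ₁ : γ < 1) {V W : S → ℝ}
    (hV : ∀ s, V s ≤ bellman P r γ π V s) (hW : ∀ s, W s = bellman P r γ π W s) (s : S) :
    V s ≤ W s := by
  have : Nonempty S := ⟨s⟩
  obtain ⟨s₀, hs₀⟩ := Finite.exists_max fun s => V s - W s
  have hM : V s₀ - W s₀ ≤ γ * (V s₀ - W s₀) :=
    (sub_le_sub (hV s₀) (hW s₀).ge).trans (bellman_sub_bellman_le hγ₀ hP₀ hP₁ hπ₀ hπ₁ hs₀ s₀)
  have hM₀ : V s₀ - W s₀ ≤ 0 := by nlinarith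
  linarith [hs₀ s]

end Bellman

theorem policy_improvement_general
    {S A : Type*} [Fintype S] [Fintype A]
    (P : S → A → S → ℝ) (r : S → A → ℝ) (γ : ℝ) (hγ0 : 0 ≤ γ) (hγ1 : γ < 1)
    (hPnn : ∀ s a s', 0 ≤ P s a s') (hPsum : ∀ s a, ∑ s', P s a s' = 1)
    (πnew : S → A → ℝ)
    (hπnewnn : ∀ s a, 0 ≤ πnew s a) (hπnewsum : ∀ s, ∑ a, πnew s a = 1)
    (Vold Vnew : S → ℝ)
    -- Bellman equations for the two policies
    (hBnew : ∀ s, Vnew s = ∑ a, πnew s a * (r s a + γ * ∑ s', P s a s' * Vnew s'))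
    -- advantage of the old policy
    (Adv : S → A → ℝ)
    (hAdv : ∀ s a, Adv s a = r s a + γ * ∑ s', P s a s' * Vold s' - Vold s)
    -- nonnegative expected advantage under π_new in every state
    (himpr : ∀ s, 0 ≤ ∑ a, πnew s a * Adv s a) :
    ∀ s, Vold s ≤ Vnew s := by
  have hold : ∀ s, Vold s ≤ bellman P r γ πnew Vold s := fun s => by
    have h := himpr s
    simp only [hAdv, sum_mul_advantage hπnewsum] at h
    linarith
  exact le_of_le_bellman_of_eq_bellman hγ0 hPnn hPsum hπnewnn hπnewsum hγ1 hold hBnew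

/-- policy improvement for a finite discounted MDP. If the value
functions of the old and new policies satisfy their Bellman equations, and the
expected advantage of the new policy is nonnegative in every state, then
`V^{π_new}(s) ≥ V^{π_old}(s)` for all states `s`. -/
theorem policy_improvement
    {S A : Type*} [Fintype S] [Fintype A] [Nonempty S] [Nonempty A]
    (P : S → A → S → ℝ) (r : S → A → ℝ) (γ : ℝ) (hγ0 : 0 ≤ γ) (hγ1 : γ < 1)
    (hPnn : ∀ s a s', 0 ≤ P s a s') (hPsum : ∀ s a, ∑ s', P s a s' = 1)
    (πold πnew : S → A → ℝ)
    (hπoldnn : ∀ s a, 0 ≤ πold s a) (hπoldsum : ∀ s, ∑ a, πold s a = 1)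
    (hπnewnn : ∀ s a, 0 ≤ πnew s a) (hπnewsum : ∀ s, ∑ a, πnew s a = 1)
    (Vold Vnew : S → ℝ)
    -- Bellman equations for the two policies
    (hBold : ∀ s, Vold s = ∑ a, πold s a * (r s a + γ * ∑ s', P s a s' * Vold s'))
    (hBnew : ∀ s, Vnew s = ∑ a, πnew s a * (r s a + γ * ∑ s', P s a s' * Vnew s'))
    -- advantage of the old policy
    (Adv : S → A → ℝ)
    (hAdv : ∀ s a, Adv s a = r s a + γ * ∑ s', P s a s' * Vold s' - Vold s)
    -- nonnegative expected advantage under π_new in every state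
    (himpr : ∀ s, 0 ≤ ∑ a, πnew s a * Adv s a) :
    ∀ s, Vold s ≤ Vnew s :=
  policy_improvement_general P r γ hγ0 hγ1 hPnn hPsum πnew hπnewnn hπnewsum Vold Vnew hBnew Adv hAdv
    himpr
end
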